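/- arXiv:1303.4483 — 5 statements merged into one kernel-verified Lean document; each statement's English description precedes it below -/
import Mathlib

section
/- Let A be a C*-algebra and B ⊆ A a subset of the form B = { x ∈ A : x·x₀ = x₀·x = x } for a fixed positive contraction x₀ ∈ A. Then B is a hereditary C*-subalgebra of A; that is, B is a closed *-subalgebra and whenever 0 ≤ a ≤ b with b ∈ B and a ∈ A, one has a ∈ B. -/
/-- For a positive contraction `x₀` in a C*-algebra `A`, the set
`B = { x ∈ A : x x₀ = x₀ x = x }` is a hereditary C*-subalgebra of `A`. -/
theorem hereditary_of_unit_for_positive_contraction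
    {A : Type*} [NormedRing A] [StarRing A] [CStarRing A] [CompleteSpace A]
    [NormedAlgebra ℂ A] [StarModule ℂ A] [PartialOrder A] [StarOrderedRing A]
    (x₀ : A) (hx₀pos : 0 ≤ x₀) (hx₀norm : ‖x₀‖ ≤ 1) :
    let B : Set A := {x : A | x * x₀ = x ∧ x₀ * x = x}
    IsClosed B ∧
    (∀ x ∈ B, ∀ y ∈ B, x + y ∈ B) ∧
    (∀ x ∈ B, ∀ y ∈ B, x * y ∈ B) ∧
    (∀ (c : ℂ), ∀ x ∈ B, c • x ∈ B) ∧
    (∀ x ∈ B, star x ∈ B) ∧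
    (∀ a b : A, 0 ≤ a → a ≤ b → b ∈ B → a ∈ B) := by
  letI : CStarAlgebra A := { }
  intro B
  have hx₀sa : IsSelfAdjoint x₀ := .of_nonneg hx₀pos
  refine ⟨?_, ?_, ?_, ?_, ?_, ?_⟩
  · have : B = {x : A | x * x₀ = x} ∩ {x : A | x₀ * x = x} := rfl
    rw [this]
    exact (isClosed_eq (by fun_prop) continuous_id).inter
      (isClosed_eq (by fun_prop) continuous_id)
  · rintro x ⟨hx1, hx2⟩ y ⟨hy1, hy2⟩
    exact ⟨by rw [add_mul, hx1, hy1], by rw [mul_add, hx2, hy2]⟩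
  · rintro x ⟨hx1, hx2⟩ y ⟨hy1, hy2⟩
    exact ⟨by rw [mul_assoc, hy1], by rw [← mul_assoc, hx2]⟩
  · rintro c x ⟨hx1, hx2⟩
    exact ⟨by rw [smul_mul_assoc, hx1], by rw [mul_smul_comm, hx2]⟩
  · rintro x ⟨hx1, hx2⟩
    constructor
    · rw [← hx₀sa.star_eq, ← star_mul, hx2]
    · rw [← hx₀sa.star_eq, ← star_mul, hx1]
  · rintro a b ha hab ⟨hb1, hb2⟩
    have hasa : IsSelfAdjoint a := .of_nonneg ha
    set u : A := 1 - x₀ with hu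
    have husa : IsSelfAdjoint u := (IsSelfAdjoint.one A).sub hx₀sa
    have hbu : b * u = 0 := by rw [hu, mul_sub, mul_one, hb1, sub_self]
    have hub : u * b = 0 := by rw [hu, sub_mul, one_mul, hb2, sub_self]
    have hconj : star u * a * u = 0 := by
      have h1 : star u * a * u ≤ star u * b * u := star_left_conjugate_le_conjugate hab u
      have h2 : star u * b * u = 0 := by rw [husa.star_eq, hub, zero_mul]
      have h3 : 0 ≤ star u * a * u := star_left_conjugate_nonneg ha u
      exact le_antisymm (h2 ▸ h1) h3
    set s : A := CFC.sqrt a with hs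
    have hs_nonneg : 0 ≤ s := CFC.sqrt_nonneg (a := a)
    have hssa : IsSelfAdjoint s := .of_nonneg hs_nonneg
    have hss : s * s = a := CFC.sqrt_mul_sqrt_self a ha
    have hsu : s * u = 0 := by
      rw [← CStarRing.star_mul_self_eq_zero_iff]
      calc star (s * u) * (s * u) = star u * (s * s) * u := by
            rw [star_mul, husa.star_eq, hssa.star_eq, mul_assoc, mul_assoc, mul_assoc]
      _ = 0 := by rw [hss, hconj]
    have hsx₀ : s * x₀ = s := by
      have := hsu
      rw [hu, mul_sub, mul_one, sub_eq_zero] at this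
      exact this.symm
    have ha1 : a * x₀ = a := by rw [← hss, mul_assoc, hsx₀]
    refine ⟨ha1, ?_⟩
    calc x₀ * a = star (a * x₀) := by rw [star_mul, hasa.star_eq, hx₀sa.star_eq]
    _ = a := by rw [ha1, hasa.star_eq]
end

section
/- Let A = C₀(X) for a locally compact Hausdorff space X, with a partial action α of a discrete group G induced by a partial action θ on X (so D_t = C₀(X_t) and α_t(f) = f ∘ θ_{t⁻¹}). Fix t ≠ e. If there exists a nonzero α_t-invariant closed ideal K of C₀(X_{t⁻¹}) with ‖α_t|_K − id|_K‖ = 0, then the fixed-point set F_t = { x ∈ X_{t⁻¹} : θ_t(x) = x } has nonempty interior. Conversely, if F_t has nonempty interior, then there is a nonzero ideal K = C₀(V) contained in C₀(X_{t⁻¹}) with α_t(f) = f for all f ∈ K. -/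
open scoped ZeroAtInfty Classical

/-- A bump function in `C₀(X, ℂ)`: value `1` at a given point, vanishing outside
a given open neighborhood. -/
lemma exists_bump_czero {X : Type*} [TopologicalSpace X] [LocallyCompactSpace X] [T2Space X]
    (x : X) (V : Set X) (hV : IsOpen V) (hx : x ∈ V) :
    ∃ f : C₀(X, ℂ), f x = 1 ∧ ∀ y ∉ V, f y = 0 := by
  obtain ⟨g, hg1, hg0, hgc, -⟩ :=
    exists_continuous_one_zero_of_isCompact (isCompact_singleton (x := x)) hV.isClosed_compl
      (by simpa [Set.disjoint_left] using hx)
  have hcont : Continuous fun y => (g y : ℂ) := Complex.continuous_ofReal.comp g.continuous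
  have hcs : HasCompactSupport fun y => (g y : ℂ) :=
    hgc.comp_left (g := fun r : ℝ => (r : ℂ)) Complex.ofReal_zero
  refine ⟨⟨⟨fun y => (g y : ℂ), hcont⟩, hcs.is_zero_at_infty⟩, ?_, ?_⟩
  · simp [hg1 (Set.mem_singleton x)]
  · intro y hy
    simp [hg0 (by simpa using hy)]

/-- For the partial action of `G` on `C₀(X)` induced by a partial homeomorphism
`θ_t = τ : U → W` (with inverse `σ`), and `t ≠ e`: if there is a nonzero
`α_t`-invariant closed ideal `K` of `C₀(U)` on which `‖α_t|_K − id|_K‖ = 0`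
(i.e. `α_t` is the identity on `K`), then the fixed-point set
`F_t = { x ∈ U : τ x = x }` has nonempty interior; conversely, if `F_t` has
nonempty interior then there is a nonzero ideal `K = C₀(V')` inside `C₀(U)` on
which `α_t` acts as the identity. -/
theorem fixedSet_interior_iff_invariant_ideal
    {X : Type*} [TopologicalSpace X] [LocallyCompactSpace X] [T2Space X]
    (U W : Set X) (hU : IsOpen U) (hW : IsOpen W)
    (τ σ : X → X) (hbij : Set.BijOn τ U W)
    (hτcont : ContinuousOn τ U) (hσcont : ContinuousOn σ W)
    (hστ : ∀ x ∈ U, σ (τ x) = x) (hτσ : ∀ y ∈ W, τ (σ y) = y) :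
    -- the induced map `α_t` on functions: `α f x = f (σ x)` for `x ∈ W`, `0` otherwise
    (∀ K : Set C₀(X, ℂ),
      IsClosed K →
      (∃ f ∈ K, f ≠ 0) →
      (∀ f ∈ K, ∀ g ∈ K, f + g ∈ K) →
      (∀ (c : ℂ), ∀ f ∈ K, c • f ∈ K) →
      (∀ g : C₀(X, ℂ), ∀ f ∈ K, g * f ∈ K) →
      (∀ f ∈ K, ∀ x ∉ U, f x = 0) →
      -- `α_t`-invariance of `K`
      (∀ f ∈ K, ∃ g ∈ K, ∀ x, g x = if x ∈ W then f (σ x) else 0) →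
      -- `‖α_t|_K − id|_K‖ = 0`
      (∀ f ∈ K, ∀ x, (if x ∈ W then f (σ x) else 0) = f x) →
      (interior {x : X | x ∈ U ∧ τ x = x}).Nonempty) ∧
    ((interior {x : X | x ∈ U ∧ τ x = x}).Nonempty →
      ∃ V' : Set X, IsOpen V' ∧ V'.Nonempty ∧ V' ⊆ U ∧
        (∃ f : C₀(X, ℂ), f ≠ 0 ∧ ∀ x ∉ V', f x = 0) ∧
        (∀ f : C₀(X, ℂ), (∀ x ∉ V', f x = 0) →
          ∀ x, (if x ∈ W then f (σ x) else 0) = f x)) := by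
  constructor
  · rintro K _hKcl ⟨f, hfK, hfne⟩ _hadd _hsmul hideal hsupp _hinv hid
    obtain ⟨x₀, hx₀⟩ : ∃ x, f x ≠ 0 := by
      by_contra h
      push_neg at h
      exact hfne (DFunLike.ext f 0 fun x => by simpa using h x)
    set V : Set X := {x | f x ≠ 0} with hVdef
    have hVopen : IsOpen V := by
      have : V = f ⁻¹' {(0 : ℂ)}ᶜ := by ext y; simp [hVdef]
      rw [this]
      exact (map_continuous f).isOpen_preimage _ isClosed_singleton.isOpen_compl
    have hsub : V ⊆ {x : X | x ∈ U ∧ τ x = x} := by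
      intro x hfx
      have hfx : f x ≠ 0 := hfx
      have hxU : x ∈ U := by
        by_contra h
        exact hfx (hsupp f hfK x h)
      have hxW : x ∈ W := by
        by_contra h
        have := hid f hfK x
        rw [if_neg h] at this
        exact hfx this.symm
      have hfσ : f (σ x) = f x := by
        have := hid f hfK x
        rwa [if_pos hxW] at this
      have hg : ∀ g : C₀(X, ℂ), g (σ x) = g x := by
        intro g
        have := hid (g * f) (hideal g f hfK) x
        rw [if_pos hxW] at this
        simp only [ZeroAtInftyContinuousMap.coe_mul, Pi.mul_apply] at this
        rw [hfσ] at this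
        exact mul_right_cancel₀ hfx this
      have hσx : σ x = x := by
        by_contra hne
        obtain ⟨g, hg1, hg0⟩ :=
          exists_bump_czero x ({σ x}ᶜ : Set X) isClosed_singleton.isOpen_compl
            (by simpa using (Ne.symm hne))
        have h0 : g (σ x) = 0 := hg0 (σ x) (by simp)
        rw [hg g, hg1] at h0
        exact one_ne_zero h0
      refine ⟨hxU, ?_⟩
      have := hτσ x hxW
      rwa [hσx] at this
    exact ⟨x₀, interior_maximal hsub hVopen hx₀⟩
  · rintro ⟨x₀, hx₀⟩
    set F : Set X := {x : X | x ∈ U ∧ τ x = x} with hF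
    refine ⟨interior F, isOpen_interior, ⟨x₀, hx₀⟩, fun x hx => (interior_subset hx).1, ?_, ?_⟩
    · obtain ⟨f, hf1, hf0⟩ := exists_bump_czero x₀ (interior F) isOpen_interior hx₀
      exact ⟨f, fun h => by rw [h] at hf1; simpa using hf1, hf0⟩
    · intro f hf x
      have key : ∀ y ∈ interior F, σ y = y := by
        intro y hy
        have hyF := interior_subset hy
        have := hστ y hyF.1
        rwa [hyF.2] at this
      by_cases hxW : x ∈ W
      · rw [if_pos hxW]
        by_cases hσV : σ x ∈ interior F
        · have : σ x = x := by
            have h1 := hτσ x hxW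
            have h2 := (interior_subset hσV).2
            rw [h2] at h1
            exact h1
          rw [this]
        · have hxV : x ∉ interior F := by
            intro hxV
            have : σ x = x := key x hxV
            exact hσV (by rw [this]; exact hxV)
          rw [hf _ hσV, hf _ hxV]
      · rw [if_neg hxW]
        have hxV : x ∉ interior F := by
          intro hxV
          have hxF := interior_subset hxV
          have : τ x ∈ W := hbij.mapsTo hxF.1
          rw [hxF.2] at this
          exact hxW this
        exact (hf _ hxV).symm
end

section
/- Let X be a locally compact Hausdorff space, V ⊆ X open nonempty, and θ : V → θ(V) ⊆ X a homeomorphism onto an open set such that the set { x ∈ V : θ(x) = x } has empty interior in V. Then inf{ ‖h · (h ∘ θ⁻¹)‖_∞ : h ∈ C₀(V), h ≥ 0, ‖h‖_∞ = 1 } = 0, where h ∘ θ⁻¹ is extended by zero outside θ(V). -/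
open scoped ZeroAtInfty Classical

open Set

/-! Since the fixed-point set of `τ` has empty interior, `τ` moves some point `x₀ ∈ V`.
Separating `x₀` from `τ x₀` and using continuity of `τ` gives an open `Y ∋ x₀` inside `V`
with `τ '' Y ∩ Y = ∅`. An Urysohn function `h` with `h x₀ = 1` supported in `Y` then has
norm one, while `h(x) h(σ x) = 0` for every `x ∈ τ '' V`: if `σ x ∈ Y`, then
`x = τ (σ x) ∉ Y`. So `0` belongs to the set and bounds it from below. -/

theorem exists_mem_ne_of_interior_fixedPoints_eq_empty {X : Type*} [TopologicalSpace X]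
    {V : Set X} (hV : IsOpen V) (hne : V.Nonempty) {τ : X → X}
    (hfix : interior {x : X | x ∈ V ∧ τ x = x} = ∅) : ∃ x ∈ V, τ x ≠ x := by
  by_contra! hτ
  have hVsub : V ⊆ interior {x : X | x ∈ V ∧ τ x = x} :=
    hV.subset_interior_iff.mpr fun x hx => ⟨hx, hτ x hx⟩
  rw [hfix] at hVsub
  exact hne.not_subset_empty hVsub

theorem exists_isOpen_mapsTo_compl_of_ne {X : Type*} [TopologicalSpace X] [T2Space X]
    {V : Set X} (hV : IsOpen V) {τ : X → X} (hτ : ContinuousOn τ V) {x₀ : X}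
    (hx₀V : x₀ ∈ V) (hx₀ : τ x₀ ≠ x₀) :
    ∃ Y : Set X, IsOpen Y ∧ x₀ ∈ Y ∧ Y ⊆ V ∧ MapsTo τ Y Yᶜ := by
  obtain ⟨U₁, U₂, hU₁, hU₂, hτx₀U₁, hx₀U₂, hdisj⟩ := t2_separation hx₀
  refine ⟨V ∩ τ ⁻¹' U₁ ∩ U₂, (hτ.isOpen_inter_preimage hV hU₁).inter hU₂,
    ⟨⟨hx₀V, hτx₀U₁⟩, hx₀U₂⟩, fun x hx => hx.1.1, ?_⟩
  rintro x ⟨⟨-, hτx⟩, -⟩ ⟨-, hτx'⟩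
  exact hdisj.ne_of_mem hτx hτx' rfl

theorem ZeroAtInftyContinuousMap.exists_norm_eq_one_nonneg_of_isOpen {X : Type*}
    [TopologicalSpace X] [RegularSpace X] [LocallyCompactSpace X] {Y : Set X} (hY : IsOpen Y)
    {x₀ : X} (hx₀ : x₀ ∈ Y) :
    ∃ h : C₀(X, ℝ), ‖h‖ = 1 ∧ (∀ x, 0 ≤ h x) ∧ ∀ x ∉ Y, h x = 0 := by
  obtain ⟨f, hf1, hf0, hfc, hf01⟩ := exists_continuous_one_zero_of_isCompact
    isCompact_singleton hY.isClosed_compl (disjoint_singleton_left.mpr (not_not.mpr hx₀))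
  let h : C₀(X, ℝ) := ⟨f, hfc.is_zero_at_infty⟩
  refine ⟨h, ?_, fun x => (hf01 x).1, fun x hx => hf0 hx⟩
  have : Nonempty X := ⟨x₀⟩
  rw [← norm_toBCF_eq_norm]
  refine le_antisymm (BoundedContinuousFunction.norm_le_of_nonempty.mpr fun x => ?_) ?_
  · change ‖f x‖ ≤ 1
    rw [Real.norm_eq_abs, abs_of_nonneg (hf01 x).1]
    exact (hf01 x).2
  · have hx₀1 : h x₀ = 1 := hf1 rfl
    calc (1 : ℝ) = ‖h x₀‖ := by rw [hx₀1, norm_one]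
      _ ≤ ‖h.toBCF‖ := h.toBCF.norm_coe_le_norm x₀

theorem mul_ite_comp_eq_zero_of_mapsTo_compl {X : Type*} {Y W : Set X} {τ σ : X → X}
    (hτσ : ∀ y ∈ W, τ (σ y) = y) (hYτ : MapsTo τ Y Yᶜ) {h : X → ℝ}
    (hh : ∀ x ∉ Y, h x = 0) (x : X) :
    h x * (if x ∈ W then h (σ x) else 0) = 0 := by
  split_ifs with hxW
  · by_cases hσx : σ x ∈ Y
    · have hx : x ∉ Y := hτσ x hxW ▸ hYτ hσx
      rw [hh x hx, zero_mul]
    · rw [hh _ hσx, mul_zero]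
  · exact mul_zero _

theorem inf_norm_mul_comp_eq_zero_of_topFree_general
    {X : Type*} [TopologicalSpace X] [LocallyCompactSpace X] [T2Space X]
    (V : Set X) (hV : IsOpen V) (hne : V.Nonempty)
    (τ σ : X → X)
    (hτcont : ContinuousOn τ V)
    (hτσ : ∀ y ∈ τ '' V, τ (σ y) = y)
    (hfix : interior {x : X | x ∈ V ∧ τ x = x} = ∅) :
    sInf {c : ℝ | ∃ h : C₀(X, ℝ),
        (∀ x ∉ V, h x = 0) ∧ (∀ x, 0 ≤ h x) ∧ ‖h‖ = 1 ∧
        c = ⨆ x, |h x * (if x ∈ τ '' V then h (σ x) else 0)|} = 0 := by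
  obtain ⟨x₀, hx₀V, hx₀⟩ := exists_mem_ne_of_interior_fixedPoints_eq_empty hV hne hfix
  obtain ⟨Y, hYopen, hx₀Y, hYV, hYτ⟩ := exists_isOpen_mapsTo_compl_of_ne hV hτcont hx₀V hx₀
  obtain ⟨h, hnorm, hpos, hsupp⟩ :=
    ZeroAtInftyContinuousMap.exists_norm_eq_one_nonneg_of_isOpen hYopen hx₀Y
  refine IsLeast.csInf_eq ⟨⟨h, fun x hx => hsupp x (hx ∘ @hYV x), hpos, hnorm, ?_⟩, ?_⟩
  · simp only [mul_ite_comp_eq_zero_of_mapsTo_compl hτσ hYτ hsupp, abs_zero, Real.iSup_const_zero]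
  · rintro c ⟨g, -, -, -, rfl⟩
    exact Real.iSup_nonneg fun x => abs_nonneg _

/-- If `θ : V → θ(V)` is a partial homeomorphism of a locally compact Hausdorff space
whose fixed-point set has empty interior in `V`, then
`inf{ ‖h · (h ∘ θ⁻¹)‖ : h ∈ C₀(V)₊, ‖h‖ = 1 } = 0`, where `h ∘ θ⁻¹` is extended by
zero outside `θ(V)`. -/
theorem inf_norm_mul_comp_eq_zero_of_topFree
    {X : Type*} [TopologicalSpace X] [LocallyCompactSpace X] [T2Space X]
    (V : Set X) (hV : IsOpen V) (hne : V.Nonempty)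
    (τ σ : X → X)
    (hτcont : ContinuousOn τ V) (hσcont : ContinuousOn σ (τ '' V))
    (hopen : IsOpen (τ '' V))
    (hστ : ∀ x ∈ V, σ (τ x) = x) (hτσ : ∀ y ∈ τ '' V, τ (σ y) = y)
    (hfix : interior {x : X | x ∈ V ∧ τ x = x} = ∅) :
    sInf {c : ℝ | ∃ h : C₀(X, ℝ),
        (∀ x ∉ V, h x = 0) ∧ (∀ x, 0 ≤ h x) ∧ ‖h‖ = 1 ∧
        c = ⨆ x, |h x * (if x ∈ τ '' V then h (σ x) else 0)|} = 0 :=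
  inf_norm_mul_comp_eq_zero_of_topFree_general V hV hne τ σ hτcont hτσ hfix
end

section
/- Let X be a topological space that is totally Baire (every intersection of an open and a closed subset of X is a Baire space) and second countable, and let F ⊆ X be a nonempty closed subset. Then F is the closure of a single point if and only if F is not the union of two proper closed subsets. -/
/-- Green's lemma: in a second countable, totally Baire space, a nonempty closed set `F`
is the closure of a single point iff it is not the union of two proper closed subsets. -/
theorem closure_singleton_iff_not_union_of_proper_closed
    {X : Type*} [TopologicalSpace X] [SecondCountableTopology X]
    (htb : ∀ (U C : Set X), IsOpen U → IsClosed C → BaireSpace ↥(U ∩ C))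
    (F : Set X) (hF : IsClosed F) (hne : F.Nonempty) :
    (∃ x : X, F = closure {x}) ↔
      ¬ ∃ C₁ C₂ : Set X, IsClosed C₁ ∧ IsClosed C₂ ∧ C₁ ⊆ F ∧ C₂ ⊆ F ∧
        C₁ ≠ F ∧ C₂ ≠ F ∧ C₁ ∪ C₂ = F := by
  constructor
  · rintro ⟨x, rfl⟩ ⟨C₁, C₂, hC₁, hC₂, h₁F, h₂F, h₁ne, h₂ne, hun⟩
    have hx : x ∈ C₁ ∪ C₂ := by rw [hun]; exact subset_closure rfl
    rcases hx with hx | hx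
    · exact h₁ne (le_antisymm h₁F (closure_minimal (Set.singleton_subset_iff.2 hx) hC₁))
    · exact h₂ne (le_antisymm h₂F (closure_minimal (Set.singleton_subset_iff.2 hx) hC₂))
  · intro h
    have hpre : IsPreirreducible F := by
      rw [isPreirreducible_iff_isClosed_union_isClosed]
      intro z₁ z₂ hz₁ hz₂ hsub
      by_contra hc
      push_neg at hc
      refine h ⟨z₁ ∩ F, z₂ ∩ F, hz₁.inter hF, hz₂.inter hF, Set.inter_subset_right,
        Set.inter_subset_right, ?_, ?_, ?_⟩
      · intro he
        exact hc.1 (fun y hy => by rw [← he] at hy; exact hy.1)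
      · intro he
        exact hc.2 (fun y hy => by rw [← he] at hy; exact hy.1)
      · rw [← Set.union_inter_distrib_right]
        exact Set.inter_eq_right.2 hsub
    haveI hB : BaireSpace ↥F := by
      have := htb Set.univ F isOpen_univ hF
      rwa [Set.univ_inter] at this
    haveI : Nonempty ↥F := hne.to_subtype
    set b := TopologicalSpace.countableBasis X with hbdef
    have hb : TopologicalSpace.IsTopologicalBasis b :=
      TopologicalSpace.isBasis_countableBasis X
    haveI : Countable {s : Set X // s ∈ b ∧ (s ∩ F).Nonempty} :=
      Set.Countable.to_subtype
        (show ({s | s ∈ b ∧ (s ∩ F).Nonempty} : Set (Set X)).Countable from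
          (TopologicalSpace.countable_countableBasis X).mono (fun s hs => hs.1))
    have hdense : Dense (⋂ s : {s : Set X // s ∈ b ∧ (s ∩ F).Nonempty},
        (Subtype.val ⁻¹' s.1 : Set ↥F)) := by
      apply dense_iInter_of_isOpen
      · intro s; exact (hb.isOpen s.2.1).preimage continuous_subtype_val
      · intro s
        rw [dense_iff_inter_open]
        intro V hV hVne
        obtain ⟨U, hU, rfl⟩ := isOpen_induced_iff.mp hV
        obtain ⟨⟨y, hyF⟩, hyU⟩ := hVne
        obtain ⟨z, hzF, hzU, hzs⟩ :=
          hpre U s.1 hU (hb.isOpen s.2.1) ⟨y, hyF, hyU⟩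
            ⟨s.2.2.choose, s.2.2.choose_spec.2, s.2.2.choose_spec.1⟩
        exact ⟨⟨z, hzF⟩, hzU, hzs⟩
    obtain ⟨x, hx⟩ := hdense.nonempty
    rw [Set.mem_iInter] at hx
    refine ⟨x.1, subset_antisymm ?_ (closure_minimal (Set.singleton_subset_iff.2 x.2) hF)⟩
    intro y hy
    rw [hb.mem_closure_iff]
    intro o ho hyo
    exact ⟨x.1, hx ⟨o, ho, ⟨y, hyo, hy⟩⟩, rfl⟩
end

section
/- Let G act partially on a set X (with subsets X_t and bijections θ_t : X_{t⁻¹} → X_t such that θ_{st} extends θ_s ∘ θ_t and θ_e = id). Define an equivalence relation on G × X by (r,x) ∼ (s,y) iff x ∈ X_{r⁻¹s} and θ_{s⁻¹r}(x) = y. Then ∼ is indeed an equivalence relation, and the formula h^e_s([t,x]) = [st,x] gives a well-defined action of G on the quotient (G × X)/∼. -/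
/-- A partial action of a group `G` on a set `X` (no topology). -/
structure SetPartialAction (G X : Type*) [Group G] where
  dom : G → Set X
  act : G → X → X
  dom_one : dom 1 = Set.univ
  act_one : ∀ x, act 1 x = x
  mapsTo : ∀ t, Set.MapsTo (act t) (dom t⁻¹) (dom t)
  act_inv : ∀ t, ∀ x ∈ dom t⁻¹, act t⁻¹ (act t x) = x
  act_mul : ∀ s t : G, ∀ x ∈ dom s⁻¹, act s x ∈ dom t⁻¹ →
      x ∈ dom (t * s)⁻¹ ∧ act t (act s x) = act (t * s) x

/-- The envelope relation on `G × X`: `(r,x) ∼ (s,y)` iff `x ∈ X_{r⁻¹s}` and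
`θ_{s⁻¹r}(x) = y`. -/
def envRel {G X : Type*} [Group G] (P : SetPartialAction G X) (a b : G × X) : Prop :=
  a.2 ∈ P.dom (a.1⁻¹ * b.1) ∧ P.act (b.1⁻¹ * a.1) a.2 = b.2

/-- The envelope relation is an equivalence relation, and left translation
`(t,x) ↦ (st,x)` descends to a well-defined `G`-action on the quotient. -/
theorem envRel_equivalence_and_action
    {G X : Type*} [Group G] (P : SetPartialAction G X) :
    Equivalence (envRel P) ∧
    (∀ s : G, ∀ a b : G × X, envRel P a b →
      envRel P (s * a.1, a.2) (s * b.1, b.2)) := by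

  constructor
  · constructor
    · intro a
      refine ⟨?_, ?_⟩ <;> simp [P.dom_one, P.act_one]
    · rintro ⟨r, x⟩ ⟨s, y⟩ ⟨hx, hy⟩
      have h1 : x ∈ P.dom ((s⁻¹ * r)⁻¹) := by simpa [mul_comm] using hx
      refine ⟨?_, ?_⟩
      · have := P.mapsTo (s⁻¹ * r) h1
        simpa [hy] using this
      · have := P.act_inv (s⁻¹ * r) x h1
        simpa [hy] using this
    · rintro ⟨r, x⟩ ⟨s, y⟩ ⟨u, z⟩ ⟨hx, hy⟩ ⟨hy2, hz⟩
      have h1 : x ∈ P.dom ((s⁻¹ * r)⁻¹) := by simpa using hx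
      have h2 : P.act (s⁻¹ * r) x ∈ P.dom ((u⁻¹ * s)⁻¹) := by
        rw [hy]; simpa using hy2
      obtain ⟨hd, he⟩ := P.act_mul (s⁻¹ * r) (u⁻¹ * s) x h1 h2
      have hms : u⁻¹ * s * (s⁻¹ * r) = u⁻¹ * r := by group
      rw [hms] at hd he
      refine ⟨by simpa using hd, ?_⟩
      rw [← he, hy, hz]
  · rintro s ⟨r, x⟩ ⟨t, y⟩ ⟨hx, hy⟩
    refine ⟨?_, ?_⟩
    · simpa [mul_assoc] using hx
    · simpa [mul_assoc] using hy
end
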